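/- arXiv:1007.4932 — 4 statements merged into one kernel-verified Lean document; each statement's English description precedes it below -/
import Mathlib

section
/- Let 0 < a ≤ b ≤ 2. There is a constant c₁ > 0 depending only on a and b with the following property: for every Lebesgue measurable α : ℝ → [a,b], every g ∈ F_α, and every real random variable X whose characteristic function satisfies 𝔼[exp(iθX)] = exp(−∫_ℝ |θ g(x)|^{α(x)} dx) for all θ ∈ ℝ, one has ℙ(|X| ≥ λ) ≤ c₁ ∫_ℝ |g(x)/λ|^{α(x)} dx for every λ > 0. -/
/-!
The truncation inequality bounds `ℙ(|X| > r)` by `(r/2) ∫_{-2/r}^{2/r} |1 - φ(t)| dt`, hence by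
twice the supremum of `|1 - φ|` on `[-2/r, 2/r]`. Here `1 - φ(t) = 1 - exp(-∫ |t g|^α) ≤ ∫ |t g|^α`,
and with `r = λ/2` pulling the factor `|t| λ ≤ 4` out of the modular `∫ |g/λ|^α` costs at most
`max (4^a) (4^b)`.
-/

open MeasureTheory Filter Set Topology ProbabilityTheory BoundedContinuousFunction

noncomputable section

/-- Membership in `F_α`: `f` is measurable and either a.e. zero or there is a (unique)
`λ > 0` with `∫ |f(x)/λ|^{α(x)} dx = 1`. -/
def MemFalpha (α f : ℝ → ℝ) : Prop :=
  Measurable f ∧ (f =ᵐ[volume] (0 : ℝ → ℝ) ∨ ∃ lam > (0:ℝ), ∫ x : ℝ, |f x / lam| ^ α x = 1)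

/-- The quasinorm `‖f‖_α`, the unique `λ > 0` with `∫ |f(x)/λ|^{α(x)} dx = 1`
(and `0` if no such `λ` exists, e.g. if `f = 0` a.e.). -/
def alphaNorm (α f : ℝ → ℝ) : ℝ :=
  sInf {lam : ℝ | 0 < lam ∧ ∫ x : ℝ, |f x / lam| ^ α x = 1}

/-- `|s|^{a,b} = max{|s|^a, |s|^b}`. -/
def pab (a b s : ℝ) : ℝ := max (|s| ^ a) (|s| ^ b)

/-- Membership in `F_{a,b}`: measurable with `∫ |f(x)|^{a,b} dx < ∞`. -/
def MemFab (a b : ℝ) (f : ℝ → ℝ) : Prop :=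
  Measurable f ∧ Integrable (fun x : ℝ => pab a b (f x))

/-- The norm `‖f‖_p = (∫ |f(x)|^p dx)^{1/p}`. -/
def pNorm (p : ℝ) (f : ℝ → ℝ) : ℝ := (∫ x : ℝ, |f x| ^ p) ^ (1 / p)

/-- Membership in `E₀`: Lebesgue measurable with finite Lebesgue measure. -/
def MemE0 (A : Set ℝ) : Prop := MeasurableSet A ∧ volume A < ⊤

section Modular

variable {E : Type*} [MeasurableSpace E] {μ : Measure E} {α f : E → ℝ} {a b c p : ℝ}

lemma rpow_le_max_rpow (hc : 0 ≤ c) (ha : 0 ≤ a) (hap : a ≤ p) (hpb : p ≤ b) :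
    c ^ p ≤ max (c ^ a) (c ^ b) := by
  rcases le_total c 1 with hc1 | hc1
  · exact le_max_of_le_left (Real.rpow_le_rpow_of_exponent_ge' hc hc1 ha hap)
  · exact le_max_of_le_right (Real.rpow_le_rpow_of_exponent_le hc1 hpb)

lemma abs_mul_rpow_le (hc : 0 ≤ c) (ha : 0 ≤ a) (hap : a ≤ p) (hpb : p ≤ b) (s : ℝ) :
    |c * s| ^ p ≤ max (c ^ a) (c ^ b) * |s| ^ p := by
  rw [abs_mul, abs_of_nonneg hc, Real.mul_rpow hc (abs_nonneg s)]
  gcongr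
  exact rpow_le_max_rpow hc ha hap hpb

lemma MeasureTheory.Integrable.of_abs_mul_rpow (hc : c ≠ 0) (ha : 0 ≤ a)
    (hα : ∀ x, α x ∈ Icc a b) (hf : Measurable f) (hαm : Measurable α)
    (hint : Integrable (fun x => |c * f x| ^ α x) μ) :
    Integrable (fun x => |f x| ^ α x) μ := by
  refine (hint.const_mul (max (|c|⁻¹ ^ a) (|c|⁻¹ ^ b))).mono'
    (hf.abs.pow hαm).aestronglyMeasurable (ae_of_all _ fun x => ?_)
  rw [Real.norm_of_nonneg (by positivity)]
  calc |f x| ^ α x = |(|c|⁻¹ * (c * f x))| ^ α x := by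
        rw [abs_mul, abs_mul, abs_inv, abs_abs, inv_mul_cancel_left₀ (abs_ne_zero.2 hc)]
    _ ≤ _ := abs_mul_rpow_le (by positivity) ha (hα x).1 (hα x).2 _

lemma integral_abs_mul_rpow_le (hc : 0 ≤ c) (ha : 0 < a) (hα : ∀ x, α x ∈ Icc a b)
    (hf : Measurable f) (hαm : Measurable α) :
    ∫ x, |c * f x| ^ α x ∂μ ≤ max (c ^ a) (c ^ b) * ∫ x, |f x| ^ α x ∂μ := by
  rcases hc.eq_or_lt with rfl | hc
  · have hzero : ∀ x, |0 * f x| ^ α x = 0 := fun x => by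
      simp [Real.zero_rpow (ha.trans_le (hα x).1).ne']
    simp only [hzero, integral_zero]
    positivity
  by_cases hint : Integrable (fun x => |f x| ^ α x) μ
  · rw [← integral_const_mul]
    exact integral_mono_of_nonneg (ae_of_all _ fun x => by positivity) (hint.const_mul _)
      (ae_of_all _ fun x => abs_mul_rpow_le hc.le ha.le (hα x).1 (hα x).2 _)
  -- otherwise `|c f|^α` is not integrable either, and both integrals take the junk value `0`
  · rw [integral_undef fun h => hint (h.of_abs_mul_rpow hc.ne' ha.le hα hf hαm)]
    positivity

end Modular

lemma norm_one_sub_exp_neg_le {s : ℝ} (hs : 0 ≤ s) : ‖1 - ((Real.exp (-s) : ℝ) : ℂ)‖ ≤ s := by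
  rw [← Complex.ofReal_one, ← Complex.ofReal_sub, Complex.norm_real,
    Real.norm_of_nonneg (by simpa using Real.exp_le_one_iff.mpr (neg_nonpos.mpr hs))]
  linarith [Real.one_sub_le_exp_neg s]

lemma measureReal_abs_gt_le_of_norm_one_sub_charFun_le {μ : Measure ℝ}
    [IsProbabilityMeasure μ] {r ε : ℝ} (hr : 0 < r) (h : ∀ t, |t| ≤ 2 / r → ‖1 - charFun μ t‖ ≤ ε) :
    μ.real {x | r < |x|} ≤ 2 * ε := by
  have hT : (0 : ℝ) < 2 * r⁻¹ := by positivity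
  calc μ.real {x | r < |x|}
      ≤ 2⁻¹ * r * ‖∫ t in (-2 * r⁻¹)..(2 * r⁻¹), 1 - charFun μ t‖ :=
        measureReal_abs_gt_le_integral_charFun hr
    _ ≤ 2⁻¹ * r * (ε * |2 * r⁻¹ - -2 * r⁻¹|) := by
        gcongr
        refine intervalIntegral.norm_integral_le_of_norm_le_const fun t ht => h t ?_
        rw [uIoc_of_le (by linarith)] at ht
        rw [abs_le, div_eq_mul_inv]
        constructor <;> linarith [ht.1, ht.2]
    _ = 2 * ε := by
        rw [abs_of_pos (by linarith)]
        field_simp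
        ring

lemma charFun_map_eq_integral {Ω : Type*} [MeasurableSpace Ω] {P : Measure Ω} {X : Ω → ℝ}
    (hX : Measurable X) (t : ℝ) :
    charFun (P.map X) t = ∫ ω, Complex.exp (Complex.I * ((t * X ω : ℝ) : ℂ)) ∂P := by
  rw [charFun_apply_real, integral_map hX.aemeasurable (by fun_prop)]
  congr with ω
  push_cast
  ring_nf

theorem multistable_integral_tail_bound_general (a b : ℝ) (ha : 0 < a) :
    ∃ c₁ > (0:ℝ), ∀ (α : ℝ → ℝ), Measurable α → (∀ x, α x ∈ Set.Icc a b) →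
      ∀ g : ℝ → ℝ, MemFalpha α g →
      ∀ (Ω : Type) (_ : MeasurableSpace Ω) (P : Measure Ω), IsProbabilityMeasure P →
      ∀ X : Ω → ℝ, Measurable X →
        (∀ θ : ℝ,
          ∫ ω, Complex.exp (Complex.I * ((θ * X ω : ℝ) : ℂ)) ∂P =
            ((Real.exp (-(∫ x : ℝ, |θ * g x| ^ α x)) : ℝ) : ℂ)) →
      ∀ lam > (0:ℝ),
        (P {ω | lam ≤ |X ω|}).toReal ≤ c₁ * ∫ x : ℝ, |g x / lam| ^ α x := by
  refine ⟨2 * max (4 ^ a) (4 ^ b), by positivity, ?_⟩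
  intro α hαm hα g hg Ω _ P _ X hX hcf lam hlam
  have := Measure.isProbabilityMeasure_map (μ := P) hX.aemeasurable
  have hb : 0 ≤ b := ha.le.trans ((hα 0).1.trans (hα 0).2)
  set J := ∫ x, |g x / lam| ^ α x
  have hcharFun (t : ℝ) :
      ‖1 - charFun (P.map X) t‖ ≤ max ((|t| * lam) ^ a) ((|t| * lam) ^ b) * J := by
    rw [charFun_map_eq_integral hX, hcf]
    refine (norm_one_sub_exp_neg_le (integral_nonneg fun x => by positivity)).trans ?_
    calc ∫ x, |t * g x| ^ α x = ∫ x, |(|t| * lam) * (g x / lam)| ^ α x := by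
          congr with x
          rw [show |t| * lam * (g x / lam) = |t| * g x by field_simp, abs_mul, abs_mul, abs_abs]
      _ ≤ _ := integral_abs_mul_rpow_le (by positivity) ha hα (hg.1.div_const lam) hαm
  have hcharFun_small (t : ℝ) (ht : |t| ≤ 2 / (lam / 2)) :
      ‖1 - charFun (P.map X) t‖ ≤ max (4 ^ a) (4 ^ b) * J := by
    have hscale : |t| * lam ≤ 4 := by
      rwa [← le_div_iff₀ hlam, show (4 : ℝ) / lam = 2 / (lam / 2) by field_simp; norm_num]
    exact (hcharFun t).trans (by gcongr)
  calc (P {ω | lam ≤ |X ω|}).toReal ≤ (P.map X).real {x | lam / 2 < |x|} := by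
        rw [map_measureReal_apply hX (measurableSet_lt measurable_const measurable_abs)]
        exact measureReal_mono fun ω (h : lam ≤ |X ω|) => show lam / 2 < |X ω| by linarith
    _ ≤ 2 * (max (4 ^ a) (4 ^ b) * J) :=
        measureReal_abs_gt_le_of_norm_one_sub_charFun_le (by positivity) hcharFun_small
    _ = _ := by ring

/-- tail estimate for a multistable integral:
`ℙ(|X| ≥ λ) ≤ c₁ ∫ |g(x)/λ|^{α(x)} dx`, with `c₁` depending only on `a`, `b`. -/
theorem multistable_integral_tail_bound (a b : ℝ) (ha : 0 < a) (hab : a ≤ b) (hb : b ≤ 2) :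
    ∃ c₁ > (0:ℝ), ∀ (α : ℝ → ℝ), Measurable α → (∀ x, α x ∈ Set.Icc a b) →
      ∀ g : ℝ → ℝ, MemFalpha α g →
      ∀ (Ω : Type) (_ : MeasurableSpace Ω) (P : Measure Ω), IsProbabilityMeasure P →
      ∀ X : Ω → ℝ, Measurable X →
        (∀ θ : ℝ,
          ∫ ω, Complex.exp (Complex.I * ((θ * X ω : ℝ) : ℂ)) ∂P =
            ((Real.exp (-(∫ x : ℝ, |θ * g x| ^ α x)) : ℝ) : ℂ)) →
      ∀ lam > (0:ℝ),
        (P {ω | lam ≤ |X ω|}).toReal ≤ c₁ * ∫ x : ℝ, |g x / lam| ^ α x :=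
  multistable_integral_tail_bound_general a b ha
end
end

section
/- Let 0 < a ≤ b ≤ 2 and let α : ℝ → [a,b] be continuous with |α(x+r) − α(x)| = o(1/|log r|) as r → 0⁺, uniformly for x in bounded intervals. Let u ∈ ℝ and let g ∈ F_{a,b} have compact support. Then lim_{r → 0⁺} ∫_ℝ |g(z)|^{α(rz+u)} r^{1 − α(rz+u)/α(u)} dz = ∫_ℝ |g(z)|^{α(u)} dz. -/
open MeasureTheory Filter Set Topology ProbabilityTheory BoundedContinuousFunction

noncomputable section

/-- `|α(x+r) − α(x)| = o(1/log r)` as `r → 0⁺`, uniformly on bounded intervals. -/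
def LogLittleO (α : ℝ → ℝ) : Prop :=
  ∀ R > (0:ℝ), ∀ ε > (0:ℝ), ∃ δ > (0:ℝ), ∀ r : ℝ, 0 < r → r < δ →
    ∀ x ∈ Set.Icc (-R) R, |α (x + r) - α x| * |Real.log r| ≤ ε

/-!
On the support of `g`, contained in some `[-Z, Z]`, the log-modulus condition makes
`|α(rz+u) − α(u)| · |log r|` tend to `0` uniformly: it holds with `log (r|z|)` in place of
`log r`, and `|log (r|z|)| ≥ |log r| / 2` as soon as `r ≤ Z⁻²`. Hence
`r^{1 − α(rz+u)/α(u)} = exp (log r · (α(u) − α(rz+u)) / α(u))` tends to `1` and stays below `e`,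
while `|g z|^{α(rz+u)} ≤ |g z|^{a,b}`, so dominated convergence applies.
-/

open Real

lemma pab_nonneg (a b t : ℝ) : 0 ≤ pab a b t :=
  le_max_of_le_left (rpow_nonneg (abs_nonneg t) a)

lemma abs_rpow_le_pab {a b c : ℝ} (ha : 0 ≤ a) (hac : a ≤ c) (hcb : c ≤ b) (t : ℝ) :
    |t| ^ c ≤ pab a b t := by
  rcases le_or_gt |t| 1 with h | h
  · exact le_max_of_le_left (rpow_le_rpow_of_exponent_ge' (abs_nonneg t) h ha hac)
  · exact le_max_of_le_right (rpow_le_rpow_of_exponent_le h.le hcb)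

lemma abs_log_le_two_mul_abs_log_mul {r y : ℝ} (hr : 0 < r) (hr1 : r < 1) (hy : 0 < y)
    (hry : 2 * log y ≤ -log r) : |log r| ≤ 2 * |log (r * y)| := by
  have hlr : log r < 0 := log_neg hr hr1
  rw [log_mul hr.ne' hy.ne', abs_of_neg hlr, abs_of_neg (by linarith)]
  linarith

lemma LogLittleO.exists_abs_sub_mul_abs_log_le {α : ℝ → ℝ} (hlog : LogLittleO α) {R ε : ℝ}
    (hR : 0 < R) (hε : 0 < ε) :
    ∃ δ > 0, ∀ x ∈ Icc (-R) R, ∀ y ∈ Icc (-R) R, 0 < |y - x| → |y - x| < δ →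
      |α y - α x| * |log (|y - x|)| ≤ ε := by
  obtain ⟨δ, hδ, hαδ⟩ := hlog R hR ε hε
  refine ⟨δ, hδ, fun x hx y hy hpos hlt => ?_⟩
  rcases lt_or_gt_of_ne (sub_ne_zero.mp (abs_pos.mp hpos)) with hyx | hxy
  · rw [abs_sub_comm y x, abs_of_pos (sub_pos.2 hyx)] at hlt ⊢
    rw [abs_sub_comm (α y)]
    simpa using hαδ (x - y) (sub_pos.2 hyx) hlt y hy
  · rw [abs_of_pos (sub_pos.2 hxy)] at hlt ⊢
    simpa using hαδ (y - x) (sub_pos.2 hxy) hlt x hx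

lemma LogLittleO.eventually_abs_sub_mul_abs_log_le {α : ℝ → ℝ} (hlog : LogLittleO α)
    (u Z : ℝ) {ε : ℝ} (hε : 0 < ε) :
    ∀ᶠ r in 𝓝[>] 0, ∀ z, |z| ≤ Z → |α (r * z + u) - α u| * |log r| ≤ ε := by
  set Z' := max Z 1
  have hZ' : 0 < Z' := lt_max_of_lt_right one_pos
  obtain ⟨δ, hδ, hαδ⟩ := hlog.exists_abs_sub_mul_abs_log_le (R := |u| + Z')
    (by positivity) (half_pos hε)
  filter_upwards [Ioo_mem_nhdsGT (lt_min one_pos (div_pos hδ hZ')),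
    tendsto_log_nhdsGT_zero.eventually_le_atBot (-(2 * log Z'))] with r ⟨hr, hrδ⟩ hlogr z hz
  rcases eq_or_ne z 0 with rfl | hz0
  · simpa using hε.le
  have hzZ' : |z| ≤ Z' := hz.trans (le_max_left _ _)
  have hr1 : r < 1 := hrδ.trans_le (min_le_left _ _)
  have hdist : |r * z + u - u| = r * |z| := by
    rw [add_sub_cancel_right, abs_mul, abs_of_pos hr]
  have hrZ' : r * |z| ≤ r * Z' := by gcongr
  have hmem : ∀ x, |x - u| ≤ Z' → x ∈ Icc (-(|u| + Z')) (|u| + Z') := fun x hx =>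
    abs_le.mp (by linarith [abs_sub_abs_le_abs_sub x u])
  have hclose := hαδ u (hmem u (by simpa using hZ'.le)) (r * z + u)
    (hmem _ (by rw [hdist]; nlinarith)) (by rw [hdist]; positivity)
    (by rw [hdist]; exact hrZ'.trans_lt ((lt_div_iff₀ hZ').mp (hrδ.trans_le (min_le_right _ _))))
  rw [hdist] at hclose
  have hlogz : 2 * log |z| ≤ -log r := by
    linarith [log_le_log (abs_pos.mpr hz0) hzZ']
  calc |α (r * z + u) - α u| * |log r|
      ≤ |α (r * z + u) - α u| * (2 * |log (r * |z|)|) := by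
        gcongr; exact abs_log_le_two_mul_abs_log_mul hr hr1 (abs_pos.mpr hz0) hlogz
    _ = 2 * (|α (r * z + u) - α u| * |log (r * |z|)|) := by ring
    _ ≤ ε := by linarith

lemma LogLittleO.eventually_abs_log_mul_one_sub_div_lt {α : ℝ → ℝ} (hlog : LogLittleO α)
    {u : ℝ} (hu : 0 < α u) (Z : ℝ) {ε : ℝ} (hε : 0 < ε) :
    ∀ᶠ r in 𝓝[>] 0, ∀ z, |z| ≤ Z → |log r * (1 - α (r * z + u) / α u)| < ε := by
  filter_upwards [hlog.eventually_abs_sub_mul_abs_log_le u Z (half_pos (mul_pos hε hu))]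
    with r hr z hz
  have hexp : log r * (1 - α (r * z + u) / α u) = -(log r * (α (r * z + u) - α u)) / α u := by
    field_simp
    ring
  rw [hexp, abs_div, abs_neg, abs_of_pos hu, div_lt_iff₀ hu, abs_mul, mul_comm]
  linarith [hr z hz, mul_pos hε hu]

lemma LogLittleO.tendsto_rpow_one_sub_div {α : ℝ → ℝ} (hlog : LogLittleO α) {u : ℝ}
    (hu : 0 < α u) (z : ℝ) :
    Tendsto (fun r => r ^ (1 - α (r * z + u) / α u)) (𝓝[>] 0) (𝓝 1) := by
  have hexp : Tendsto (fun r => log r * (1 - α (r * z + u) / α u)) (𝓝[>] 0) (𝓝 0) :=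
    Metric.tendsto_nhds.2 fun ε hε => by
      filter_upwards [hlog.eventually_abs_log_mul_one_sub_div_lt hu |z| hε] with r hr
      simpa using hr z le_rfl
  have hlim := (continuous_exp.tendsto 0).comp hexp
  rw [exp_zero] at hlim
  refine hlim.congr' ?_
  filter_upwards [self_mem_nhdsWithin] with r (hr : 0 < r)
  rw [Function.comp_apply, rpow_def_of_pos hr]

lemma LogLittleO.eventually_rpow_one_sub_div_le_exp_one {α : ℝ → ℝ} (hlog : LogLittleO α)
    {u : ℝ} (hu : 0 < α u) (Z : ℝ) :
    ∀ᶠ r in 𝓝[>] 0, ∀ z, |z| ≤ Z → r ^ (1 - α (r * z + u) / α u) ≤ exp 1 := by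
  filter_upwards [self_mem_nhdsWithin, hlog.eventually_abs_log_mul_one_sub_div_lt hu Z one_pos]
    with r (hr : 0 < r) hbd z hz
  rw [rpow_def_of_pos hr, exp_le_exp]
  exact (le_abs_self _).trans (hbd z hz).le

theorem multistable_local_integral_limit_general (a b : ℝ) (ha : 0 < a)
    (α : ℝ → ℝ) (hαc : Continuous α) (hα : ∀ x, α x ∈ Set.Icc a b)
    (hlog : LogLittleO α) (u : ℝ)
    (g : ℝ → ℝ) (hg : MemFab a b g) (hgc : HasCompactSupport g) :
    Tendsto
      (fun r : ℝ => ∫ z : ℝ, |g z| ^ α (r * z + u) * r ^ (1 - α (r * z + u) / α u))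
      (𝓝[>] (0:ℝ)) (𝓝 (∫ z : ℝ, |g z| ^ α u)) := by
  have hαpos : ∀ x, 0 < α x := fun x => ha.trans_le (hα x).1
  obtain ⟨Z, hZ⟩ := hgc.isCompact.isBounded.subset_closedBall 0
  have hgZ : ∀ z, g z ≠ 0 → |z| ≤ Z := fun z hz => by
    simpa using hZ (subset_tsupport g hz)
  refine tendsto_integral_filter_of_dominated_convergence (fun z => exp 1 * pab a b (g z))
    (Eventually.of_forall fun r => ?_) ?_ (hg.2.const_mul _) (ae_of_all _ fun z => ?_)
  · have hαm : Measurable α := hαc.measurable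
    exact ((hg.1.abs.pow (by fun_prop)).mul (by fun_prop)).aestronglyMeasurable
  · filter_upwards [self_mem_nhdsWithin,
      hlog.eventually_rpow_one_sub_div_le_exp_one (hαpos u) Z] with r (hr : 0 < r) hbd
    refine ae_of_all _ fun z => ?_
    rcases eq_or_ne (g z) 0 with hz | hz
    · simpa [hz, zero_rpow (hαpos _).ne'] using mul_nonneg (exp_nonneg 1) (pab_nonneg a b 0)
    rw [norm_of_nonneg (by positivity), mul_comm (exp 1)]
    exact mul_le_mul (abs_rpow_le_pab ha.le (hα _).1 (hα _).2 _) (hbd z (hgZ z hz))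
      (by positivity) (pab_nonneg _ _ _)
  · have hbase : Continuous fun r => |g z| ^ α (r * z + u) :=
      continuous_const.rpow (hαc.comp (by fun_prop)) fun r => Or.inr (hαpos _)
    simpa using (hbase.tendsto' 0 _ (by simp)).mono_left nhdsWithin_le_nhds |>.mul
      (hlog.tendsto_rpow_one_sub_div (hαpos u) z)

/-- for `g ∈ F_{a,b}` with compact support,
`∫ |g(z)|^{α(rz+u)} r^{1−α(rz+u)/α(u)} dz → ∫ |g(z)|^{α(u)} dz` as `r → 0⁺`. -/
theorem multistable_local_integral_limit (a b : ℝ) (ha : 0 < a) (hab : a ≤ b) (hb : b ≤ 2)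
    (α : ℝ → ℝ) (hαc : Continuous α) (hα : ∀ x, α x ∈ Set.Icc a b)
    (hlog : LogLittleO α) (u : ℝ)
    (g : ℝ → ℝ) (hg : MemFab a b g) (hgc : HasCompactSupport g) :
    Tendsto
      (fun r : ℝ => ∫ z : ℝ, |g z| ^ α (r * z + u) * r ^ (1 - α (r * z + u) / α u))
      (𝓝[>] (0:ℝ)) (𝓝 (∫ z : ℝ, |g z| ^ α u)) :=
  multistable_local_integral_limit_general a b ha α hαc hα hlog u g hg hgc
end
end

section
/- Let 0 < a ≤ 2 and let α : ℝ → [a,2] be continuous, let w : ℝ → ℝ be continuous, and let u ∈ ℝ satisfy |α(u) − α(v)| = o(1/|log|u−v||) as v → u. Then for every t ∈ ℝ, lim_{r→0⁺} ∫_{J(t)} | w(u+rz) · r^{1/α(u+rz) − 1/α(u)} − w(u) |^{a,2} dz = 0, where J(t) is the interval between 0 and t (i.e. [0,t] if t ≥ 0 and [t,0] if t < 0). Consequently the weighted multistable Lévy motion Y(t) = ∫ w(x)1_{[0,t]}(x) dM_α(x) satisfies the localisability condition of the main theorem at u with index h₀ = 1/α(u) and local form kernel k(t,z) = w(u)1_{[0,t]}(z).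 -/
/-!
Write `r ^ (1/α(u+rz) - 1/α(u)) = exp (log r * (1/α(u+rz) - 1/α(u)))`. For `|z| ≤ T` and small `r`
one has `|log r| ≤ (1 + log T) |log (r|z|)|`, so the log-regularity of `α` at `u` makes the
exponent tend to `0` uniformly on bounded sets of `z`. Hence the integrand tends to `0` uniformly
on `J(t)`, and so does its integral over this set of finite measure. For the kernel, the increment
`1_{[0,u+rt]}(u+rz) - 1_{[0,u]}(u+rz)` equals `1_{[0,t]}(z)` off a finite set of `z`, which reduces
the second limit to the first.
-/

open MeasureTheory Filter Set Topology ProbabilityTheory BoundedContinuousFunction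

noncomputable section

/-- The signed indicator `1_{[0,t]}`, with the convention `1_{[u,v]} = −1_{[v,u]}`
for `v < u`. -/
def sgnInd (t x : ℝ) : ℝ :=
  if 0 ≤ t then (Set.Icc 0 t).indicator (fun _ => (1:ℝ)) x
  else -((Set.Icc t 0).indicator (fun _ => (1:ℝ)) x)

theorem tendsto_setIntegral_of_tendsto_prod_principal {ι X E : Type*} [MeasurableSpace X]
    [NormedAddCommGroup E] [NormedSpace ℝ E] {μ : Measure X} {s : Set X} (hs : μ s < ⊤)
    {l : Filter ι} {F : ι → X → E}
    (hF : Tendsto (fun q : ι × X => F q.1 q.2) (l ×ˢ 𝓟 s) (𝓝 0)) :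
    Tendsto (fun i => ∫ x in s, F i x ∂μ) l (𝓝 0) := by
  rw [NormedAddGroup.tendsto_nhds_zero] at hF ⊢
  intro ε hε
  have hm : 0 ≤ μ.real s := measureReal_nonneg
  filter_upwards [eventually_prod_principal_iff.mp (hF _ (by positivity : 0 < ε / (μ.real s + 1)))]
    with i hi
  calc ‖∫ x in s, F i x ∂μ‖ ≤ ε / (μ.real s + 1) * μ.real s :=
        norm_setIntegral_le_of_norm_le_const hs fun x hx => (hi x hx).le
    _ < ε := by
        rw [div_mul_eq_mul_div, div_lt_iff₀ (by positivity)]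
        linarith

theorem tendsto_add_mul_prod_principal (u : ℝ) {s : Set ℝ} (hs : Bornology.IsBounded s) :
    Tendsto (fun q : ℝ × ℝ => u + q.1 * q.2) (𝓝[>] 0 ×ˢ 𝓟 s) (𝓝 u) := by
  obtain ⟨C, hC⟩ := isBounded_iff_forall_norm_le.mp hs
  have hfst : Tendsto Prod.fst (𝓝[>] (0 : ℝ) ×ˢ 𝓟 s) (𝓝 0) :=
    tendsto_fst.mono_right nhdsWithin_le_nhds
  have hsnd : IsBoundedUnder (· ≤ ·) (𝓝[>] (0 : ℝ) ×ˢ 𝓟 s) (norm ∘ Prod.snd) :=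
    ⟨C, eventually_map.mpr (mem_of_superset (prod_mem_prod univ_mem (mem_principal_self s))
      fun q hq => hC q.2 hq.2)⟩
  simpa using tendsto_const_nhds.add (hfst.zero_mul_isBoundedUnder_le hsnd)

theorem abs_log_le_one_add_log_mul_abs_log_mul {r s T : ℝ} (hr : 0 < r) (hs : 0 < s)
    (hsT : s ≤ T) (hT : 1 ≤ T) (hrT : r * T ≤ Real.exp (-1)) :
    |Real.log r| ≤ (1 + Real.log T) * |Real.log (r * s)| := by
  have hrs : Real.log (r * s) ≤ -1 := by
    rw [← Real.log_exp (-1)]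
    exact Real.log_le_log (by positivity) ((mul_le_mul_of_nonneg_left hsT hr.le).trans hrT)
  have hr1 : r < 1 := by nlinarith [Real.exp_lt_one_iff.mpr (show (-1 : ℝ) < 0 by norm_num)]
  have hsplit : Real.log (r * s) = Real.log r + Real.log s := Real.log_mul hr.ne' hs.ne'
  have hlogs : Real.log s ≤ Real.log T := Real.log_le_log hs hsT
  have hlogT : 0 ≤ Real.log T := Real.log_nonneg hT
  rw [abs_of_neg (Real.log_neg hr hr1), abs_of_neg (by linarith)]
  nlinarith

-- The product vanishes at `v = u` (`log 0 = 0`), so `𝓝 u` is as good as `𝓝[≠] u`.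
theorem tendsto_log_mul_sub_prod_principal {φ : ℝ → ℝ} {u : ℝ}
    (hφ : Tendsto (fun v => (φ v - φ u) * Real.log |v - u|) (𝓝 u) (𝓝 0))
    {s : Set ℝ} (hs : Bornology.IsBounded s) :
    Tendsto (fun q : ℝ × ℝ => Real.log q.1 * (φ (u + q.1 * q.2) - φ u))
      (𝓝[>] 0 ×ˢ 𝓟 s) (𝓝 0) := by
  obtain ⟨C, hC⟩ := isBounded_iff_forall_norm_le.mp hs
  set T := max C 1
  have hT : 1 ≤ T := le_max_right C 1
  have hmajorant : Tendsto (fun q : ℝ × ℝ =>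
      (1 + Real.log T) * ‖(φ (u + q.1 * q.2) - φ u) * Real.log |u + q.1 * q.2 - u|‖)
      (𝓝[>] 0 ×ˢ 𝓟 s) (𝓝 0) := by
    have := ((hφ.comp (tendsto_add_mul_prod_principal u hs)).norm).const_mul (1 + Real.log T)
    rwa [norm_zero, mul_zero] at this
  refine squeeze_zero_norm' ?_ hmajorant
  filter_upwards [prod_mem_prod (Ioo_mem_nhdsGT (by positivity : 0 < Real.exp (-1) / T))
    (mem_principal_self s)] with ⟨r, z⟩ ⟨hr, hz⟩
  rcases eq_or_ne z 0 with rfl | hz0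
  · simp
  have hrT : r * T ≤ Real.exp (-1) := ((lt_div_iff₀ (by positivity)).mp hr.2).le
  have hlog := abs_log_le_one_add_log_mul_abs_log_mul hr.1 (abs_pos.mpr hz0)
    ((hC z hz).trans (le_max_left C 1)) hT hrT
  simp only [add_sub_cancel_left, norm_mul, Real.norm_eq_abs, abs_mul, abs_of_pos hr.1]
  calc |Real.log r| * |φ (u + r * z) - φ u|
      ≤ (1 + Real.log T) * |Real.log (r * |z|)| * |φ (u + r * z) - φ u| := by gcongr
    _ = _ := by ring

theorem tendsto_mul_rpow_sub_prod_principal {φ w : ℝ → ℝ} {u : ℝ} (hw : ContinuousAt w u)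
    (hφ : Tendsto (fun v => (φ v - φ u) * Real.log |v - u|) (𝓝 u) (𝓝 0))
    {s : Set ℝ} (hs : Bornology.IsBounded s) :
    Tendsto (fun q : ℝ × ℝ => w (u + q.1 * q.2) * q.1 ^ (φ (u + q.1 * q.2) - φ u) - w u)
      (𝓝[>] 0 ×ˢ 𝓟 s) (𝓝 0) := by
  have hpow : Tendsto (fun q : ℝ × ℝ => q.1 ^ (φ (u + q.1 * q.2) - φ u))
      (𝓝[>] 0 ×ˢ 𝓟 s) (𝓝 1) := by
    have hexp := (Real.continuous_exp.tendsto 0).comp (tendsto_log_mul_sub_prod_principal hφ hs)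
    rw [Real.exp_zero] at hexp
    refine hexp.congr' ?_
    filter_upwards [prod_mem_prod self_mem_nhdsWithin univ_mem] with q hq
    exact (Real.rpow_def_of_pos hq.1 _).symm
  simpa using ((hw.tendsto.comp (tendsto_add_mul_prod_principal u hs)).mul hpow).sub_const (w u)

theorem pab_zero {a b : ℝ} (ha : a ≠ 0) (hb : b ≠ 0) : pab a b 0 = 0 := by
  simp [pab, Real.zero_rpow ha, Real.zero_rpow hb]

theorem continuous_pab {a b : ℝ} (ha : 0 ≤ a) (hb : 0 ≤ b) : Continuous (pab a b) :=
  ((Real.continuous_rpow_const ha).comp continuous_abs).max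
    ((Real.continuous_rpow_const hb).comp continuous_abs)

theorem tendsto_setIntegral_pab_mul_rpow_sub {a b : ℝ} (ha : 0 < a) (hb : 0 < b)
    {φ w : ℝ → ℝ} {u : ℝ} (hw : ContinuousAt w u)
    (hφ : Tendsto (fun v => (φ v - φ u) * Real.log |v - u|) (𝓝 u) (𝓝 0))
    {s : Set ℝ} (hs : Bornology.IsBounded s) :
    Tendsto (fun r : ℝ => ∫ z in s, pab a b (w (u + r * z) * r ^ (φ (u + r * z) - φ u) - w u))
      (𝓝[>] 0) (𝓝 0) := by
  refine tendsto_setIntegral_of_tendsto_prod_principal hs.measure_lt_top ?_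
  have := ((continuous_pab ha.le hb.le).tendsto 0).comp
    (tendsto_mul_rpow_sub_prod_principal hw hφ hs)
  rwa [pab_zero ha.ne' hb.ne'] at this

theorem sgnInd_eq_of_ne {t x : ℝ} (hx : x ≠ 0) (hxt : x ≠ t) :
    sgnInd t x = (if x < t then 1 else 0) - (if x < 0 then 1 else 0) := by
  simp only [sgnInd, Set.indicator_apply, mem_Icc]
  split_ifs <;> grind

theorem sgnInd_sub_sgnInd {u t r z : ℝ} (hr : 0 < r) (hz0 : z ≠ 0) (hzt : z ≠ t)
    (hzu : u + r * z ≠ 0) :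
    sgnInd (u + r * t) (u + r * z) - sgnInd u (u + r * z) = sgnInd t z := by
  have hrz : r * z ≠ 0 := mul_ne_zero hr.ne' hz0
  have hrt : r * z ≠ r * t := fun h => hzt (mul_left_cancel₀ hr.ne' h)
  rw [sgnInd_eq_of_ne hzu (by simpa using hrt), sgnInd_eq_of_ne hzu (by simpa using hrz),
    sgnInd_eq_of_ne hz0 hzt]
  simp [mul_lt_mul_iff_right₀ hr, mul_neg_iff, hr, hr.le, not_lt.mpr]

theorem abs_sgnInd (t x : ℝ) : |sgnInd t x| = (uIcc 0 t).indicator 1 x := by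
  unfold sgnInd
  split_ifs with ht
  · rw [uIcc_of_le ht]
    by_cases hx : x ∈ Icc 0 t <;> simp [hx]
  · rw [uIcc_of_ge (not_le.mp ht).le]
    by_cases hx : x ∈ Icc t 0 <;> simp [hx]

theorem pab_sgnInd_mul {a b : ℝ} (ha : a ≠ 0) (hb : b ≠ 0) (t x y : ℝ) :
    pab a b (sgnInd t x * y) = (uIcc 0 t).indicator (fun _ => pab a b y) x := by
  by_cases hx : x ∈ uIcc 0 t
  · have h := abs_sgnInd t x
    simp only [indicator_of_mem hx, Pi.one_apply] at h
    simp [pab, indicator_of_mem hx, abs_mul, h]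
  · have h := abs_sgnInd t x
    simp only [indicator_of_notMem hx, abs_eq_zero] at h
    simp [h, indicator_of_notMem hx, pab_zero ha hb]

theorem integral_pab_increment_eq_setIntegral {a b : ℝ} (ha : a ≠ 0) (hb : b ≠ 0)
    (φ w : ℝ → ℝ) (u t : ℝ) {r : ℝ} (hr : 0 < r) :
    ∫ z, pab a b ((w (u + r * z) * sgnInd (u + r * t) (u + r * z) -
          w (u + r * z) * sgnInd u (u + r * z)) / r ^ (φ u - φ (u + r * z)) - w u * sgnInd t z)
      = ∫ z in uIcc 0 t, pab a b (w (u + r * z) * r ^ (φ (u + r * z) - φ u) - w u) := by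
  rw [← integral_indicator measurableSet_uIcc]
  refine integral_congr_ae ?_
  filter_upwards [(toFinite {0, t, -u / r}).countable.ae_notMem volume] with z hz
  simp only [mem_insert_iff, mem_singleton_iff, not_or] at hz
  obtain ⟨hz0, hzt, hzu⟩ := hz
  have hzu' : u + r * z ≠ 0 := fun h => hzu (by field_simp; linarith)
  rw [← mul_sub, sgnInd_sub_sgnInd hr hz0 hzt hzu', div_eq_mul_inv, ← Real.rpow_neg hr.le,
    neg_sub, show ∀ x y c : ℝ, x * sgnInd t z * c - y * sgnInd t z = sgnInd t z * (x * c - y)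
      by intros; ring, pab_sgnInd_mul ha hb]
  rfl

theorem tendsto_one_div_sub_mul_log {a : ℝ} (ha : 0 < a) {α : ℝ → ℝ} (hα : ∀ x, a ≤ α x)
    {u : ℝ} (hlog : ∀ ε > (0:ℝ), ∃ δ > (0:ℝ), ∀ v : ℝ, v ≠ u → |u - v| < δ →
      |α u - α v| * |Real.log (|u - v|)| ≤ ε) :
    Tendsto (fun v => (1 / α v - 1 / α u) * Real.log |v - u|) (𝓝 u) (𝓝 0) := by
  rw [Metric.tendsto_nhds_nhds]
  intro ε hε
  obtain ⟨δ, hδ, h⟩ := hlog (ε * a ^ 2 / 2) (by positivity)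
  refine ⟨δ, hδ, fun v hv => ?_⟩
  rw [Real.dist_eq, sub_zero]
  rcases eq_or_ne v u with rfl | hvu
  · simpa using hε
  have hu := ha.trans_le (hα u)
  have hv' := ha.trans_le (hα v)
  have hinv : |1 / α v - 1 / α u| ≤ |α u - α v| / a ^ 2 := by
    rw [div_sub_div _ _ hv'.ne' hu.ne', one_mul, mul_one, abs_div, abs_of_pos (mul_pos hv' hu)]
    gcongr
    nlinarith [hα u, hα v]
  rw [Real.dist_eq] at hv
  calc |(1 / α v - 1 / α u) * Real.log (|v - u|)|
      = |1 / α v - 1 / α u| * |Real.log (|u - v|)| := by rw [abs_mul, abs_sub_comm v u]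
    _ ≤ |α u - α v| * |Real.log (|u - v|)| / a ^ 2 := by
        rw [mul_div_right_comm]; gcongr
    _ ≤ ε * a ^ 2 / 2 / a ^ 2 := by
        gcongr; exact h v hvu (by rwa [abs_sub_comm])
    _ < ε := by field_simp; linarith

theorem weighted_multistable_levy_localisable_general (a : ℝ) (ha : 0 < a)
    (α : ℝ → ℝ) (hα : ∀ x, α x ∈ Set.Icc a 2)
    (w : ℝ → ℝ) (hw : Continuous w) (u : ℝ)
    (hlog : ∀ ε > (0:ℝ), ∃ δ > (0:ℝ), ∀ v : ℝ, v ≠ u → |u - v| < δ →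
      |α u - α v| * |Real.log (|u - v|)| ≤ ε) :
    (∀ t : ℝ,
      Tendsto (fun r : ℝ => ∫ z in Set.uIcc 0 t,
          pab a 2 (w (u + r * z) * r ^ (1 / α (u + r * z) - 1 / α u) - w u))
        (𝓝[>] (0:ℝ)) (𝓝 0)) ∧
    (∀ t : ℝ,
      Tendsto (fun r : ℝ => ∫ z : ℝ,
          pab a 2 ((w (u + r * z) * sgnInd (u + r * t) (u + r * z) -
              w (u + r * z) * sgnInd u (u + r * z)) /
            r ^ (1 / α u - 1 / α (u + r * z)) - w u * sgnInd t z))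
        (𝓝[>] (0:ℝ)) (𝓝 0)) := by
  have hφ := tendsto_one_div_sub_mul_log ha (fun x => (hα x).1) hlog
  have hJ : ∀ t : ℝ, Tendsto (fun r : ℝ => ∫ z in Set.uIcc 0 t,
      pab a 2 (w (u + r * z) * r ^ (1 / α (u + r * z) - 1 / α u) - w u)) (𝓝[>] 0) (𝓝 0) :=
    fun t => tendsto_setIntegral_pab_mul_rpow_sub ha two_pos hw.continuousAt hφ
      isCompact_uIcc.isBounded
  refine ⟨hJ, fun t => (hJ t).congr' ?_⟩
  filter_upwards [self_mem_nhdsWithin] with r hr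
  exact (integral_pab_increment_eq_setIntegral ha.ne' two_ne_zero (fun x => 1 / α x) w u t hr).symm

/-- localisability of weighted multistable Lévy motion
`Y(t) = ∫ w(x)1_{[0,t]}(x) dM_α(x)`: with `J(t) = uIcc 0 t`,
`∫_{J(t)} |w(u+rz) r^{1/α(u+rz)−1/α(u)} − w(u)|^{a,2} dz → 0` as `r → 0⁺`, and
consequently the kernel `f(t,x) = w(x)1_{[0,t]}(x)` satisfies the localisability
condition of the main theorem at `u` with index `h₀ = 1/α(u)` and limit kernel
`k(t,z) = w(u)1_{[0,t]}(z)`. -/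
theorem weighted_multistable_levy_localisable (a : ℝ) (ha : 0 < a) (ha2 : a ≤ 2)
    (α : ℝ → ℝ) (hαc : Continuous α) (hα : ∀ x, α x ∈ Set.Icc a 2)
    (w : ℝ → ℝ) (hw : Continuous w) (u : ℝ)
    (hlog : ∀ ε > (0:ℝ), ∃ δ > (0:ℝ), ∀ v : ℝ, v ≠ u → |u - v| < δ →
      |α u - α v| * |Real.log (|u - v|)| ≤ ε) :
    (∀ t : ℝ,
      Tendsto (fun r : ℝ => ∫ z in Set.uIcc 0 t,
          pab a 2 (w (u + r * z) * r ^ (1 / α (u + r * z) - 1 / α u) - w u))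
        (𝓝[>] (0:ℝ)) (𝓝 0)) ∧
    (∀ t : ℝ,
      Tendsto (fun r : ℝ => ∫ z : ℝ,
          pab a 2 ((w (u + r * z) * sgnInd (u + r * t) (u + r * z) -
              w (u + r * z) * sgnInd u (u + r * z)) /
            r ^ (1 / α u - 1 / α (u + r * z)) - w u * sgnInd t z))
        (𝓝[>] (0:ℝ)) (𝓝 0)) :=
  weighted_multistable_levy_localisable_general a ha α hα w hw u hlog
end
end

section
/- Let 0 < a ≤ b < 2, let α : ℝ → [a,b] be Lebesgue measurable, and let h₀ satisfy 1/a − 1/b < h₀ < 1 + 1/b − 1/a, with h₀ ≠ 1/α(x) for all x ∈ ℝ. Then for every t ∈ ℝ the linear fractional multistable kernel is in F_{a,b}: ∫_ℝ | (t−x)_+^{h₀ − 1/α(x)} − (−x)_+^{h₀ − 1/α(x)} |^{a,b} dx < ∞, where s_+^γ = s^γ if s > 0 and s_+^γ = 0 if s ≤ 0. -/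
open MeasureTheory Filter Set Topology ProbabilityTheory BoundedContinuousFunction

noncomputable section

/-- `s_+^γ`: equals `s^γ` if `s > 0` and `0` if `s ≤ 0`. -/
def posPow (s γ : ℝ) : ℝ := if 0 < s then s ^ γ else 0

/-!
Write `γ x = h₀ - 1 / α x ∈ [h₀ - 1/a, h₀ - 1/b]`; since `|s|^{a,b} = max (|s|^a) (|s|^b)` it
suffices that the kernel lies in `Lᵖ` for `p = a, b`. On a half-line `[L, ∞)` the kernel is
dominated by finitely many powers `(u - x)_+^c` with `c * p > -1`, which are `p`-integrable near
their singularity and vanish beyond it. As `x → -∞` the mean value theorem bounds the kernel by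
a multiple of `(-x)^(h₀ - 1/b - 1)`, which is `p`-integrable at `-∞` because
`(h₀ - 1/b - 1) * p < -1`.
-/

lemma posPow_nonneg (s γ : ℝ) : 0 ≤ posPow s γ := by
  unfold posPow
  split_ifs with h
  exacts [Real.rpow_nonneg h.le γ, le_rfl]

lemma Measurable.posPow {u v : ℝ → ℝ} (hu : Measurable u) (hv : Measurable v) :
    Measurable fun x => posPow (u x) (v x) :=
  Measurable.ite (measurableSet_lt measurable_const hu) (hu.pow hv) measurable_const

lemma posPow_rpow {p : ℝ} (hp : p ≠ 0) (s γ : ℝ) : posPow s γ ^ p = posPow s (γ * p) := by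
  unfold posPow
  split_ifs with h
  exacts [(Real.rpow_mul h.le γ p).symm, Real.zero_rpow hp]

lemma posPow_le_posPow_add_posPow {s γ lo hi : ℝ} (hlo : lo ≤ γ) (hhi : γ ≤ hi) :
    posPow s γ ≤ posPow s lo + posPow s hi := by
  unfold posPow
  split_ifs with h
  · rcases le_total s 1 with hs | hs
    · exact le_add_of_le_of_nonneg (Real.rpow_le_rpow_of_exponent_ge h hs hlo)
        (Real.rpow_nonneg h.le hi)
    · exact le_add_of_nonneg_of_le (Real.rpow_nonneg h.le lo)
        (Real.rpow_le_rpow_of_exponent_le hs hhi)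
  · simp

lemma integrableOn_Ici_posPow_sub {c : ℝ} (hc : -1 < c) (u L : ℝ) :
    IntegrableOn (fun x => posPow (u - x) c) (Ici L) := by
  have hIco : IntegrableOn (fun x => (u - x) ^ c) (Ico (min L u) u) := by
    have h := (intervalIntegral.intervalIntegrable_rpow' hc (a := 0)
      (b := u - min L u)).comp_sub_left u
    rw [sub_zero, sub_sub_cancel] at h
    exact (intervalIntegrable_iff_integrableOn_Ico_of_le (min_le_right L u)).1 h.symm
  refine ((hIco.mono_set (Ico_subset_Ico_left (min_le_left L u))).congr_fun
    (fun x hx => (if_pos (sub_pos.2 hx.2)).symm) measurableSet_Ico).of_forall_sdiff_eq_zero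
    measurableSet_Ici fun x hx => if_neg ?_
  simp only [Set.mem_sdiff, mem_Ici, mem_Ico, not_and, not_lt] at hx
  linarith [hx.2 hx.1]

lemma integrableOn_Iio_neg_rpow {e R : ℝ} (he : e < -1) (hR : 0 < R) :
    IntegrableOn (fun x : ℝ => (-x) ^ e) (Iio (-R)) := by
  have hneg : MeasurableEmbedding fun x : ℝ => -x := (Homeomorph.neg ℝ).measurableEmbedding
  rw [← Measure.map_neg_eq_self (volume : Measure ℝ), hneg.integrableOn_map_iff]
  simpa [Function.comp_def, neg_preimage, neg_Iio] using integrableOn_Ioi_rpow_of_lt he hR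

lemma abs_rpow_sub_rpow_le {γ m A B : ℝ} (hγ : γ ≤ 1) (hm : 0 < m) (hA : m ≤ A) (hB : m ≤ B) :
    |A ^ γ - B ^ γ| ≤ |γ| * m ^ (γ - 1) * |A - B| := by
  have hderiv : ∀ y ∈ Icc m (max A B),
      HasDerivWithinAt (fun z : ℝ => z ^ γ) (γ * y ^ (γ - 1)) (Icc m (max A B)) y :=
    fun y hy => (Real.hasDerivAt_rpow_const (Or.inl (hm.trans_le hy.1).ne')).hasDerivWithinAt
  have hbound : ∀ y ∈ Icc m (max A B), ‖γ * y ^ (γ - 1)‖ ≤ |γ| * m ^ (γ - 1) := by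
    intro y hy
    rw [norm_mul, Real.norm_eq_abs, Real.norm_of_nonneg (Real.rpow_nonneg (hm.trans_le hy.1).le _)]
    exact mul_le_mul_of_nonneg_left (Real.rpow_le_rpow_of_nonpos hm hy.1 (by linarith))
      (abs_nonneg γ)
  simpa [Real.norm_eq_abs] using
    (convex_Icc m (max A B)).norm_image_sub_le_of_norm_hasDerivWithin_le hderiv hbound
      ⟨hB, le_max_right A B⟩ ⟨hA, le_max_left A B⟩

lemma abs_posPow_sub_sub_le {γ lo hi t s x : ℝ} (hγ : γ ∈ Icc lo hi) (hhi : hi ≤ 1)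
    (hx : 2 * (|t| + |s| + 1) ≤ -x) :
    |posPow (t - x) γ - posPow (s - x) γ| ≤
      max |lo| |hi| * 2 ^ (1 - hi) * |t - s| * (-x) ^ (hi - 1) := by
  have hm : 1 ≤ -x / 2 := by linarith [abs_nonneg t, abs_nonneg s]
  have ht : -x / 2 ≤ t - x := by linarith [neg_abs_le t, abs_nonneg s]
  have hs : -x / 2 ≤ s - x := by linarith [neg_abs_le s, abs_nonneg t]
  have hpow : (-x / 2) ^ (γ - 1) ≤ 2 ^ (1 - hi) * (-x) ^ (hi - 1) := calc
    (-x / 2) ^ (γ - 1) ≤ (-x / 2) ^ (hi - 1) :=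
      Real.rpow_le_rpow_of_exponent_le hm (by linarith [hγ.2])
    _ = 2 ^ (1 - hi) * (-x) ^ (hi - 1) := by
      rw [Real.div_rpow (by linarith) zero_le_two, ← neg_sub hi 1, Real.rpow_neg zero_le_two]
      ring
  unfold posPow
  rw [if_pos (by linarith), if_pos (by linarith)]
  calc |(t - x) ^ γ - (s - x) ^ γ| ≤ |γ| * (-x / 2) ^ (γ - 1) * |t - x - (s - x)| :=
        abs_rpow_sub_rpow_le (hγ.2.trans hhi) (by linarith) ht hs
    _ ≤ max |lo| |hi| * (2 ^ (1 - hi) * (-x) ^ (hi - 1)) * |t - s| := by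
        rw [sub_sub_sub_cancel_right]
        gcongr
        exact abs_le_max_abs_abs hγ.1 hγ.2
    _ = _ := by ring

lemma memLp_restrict_Iio_neg_rpow {e p R : ℝ} (hp : 0 < p) (he : e * p < -1) (hR : 0 < R) :
    MemLp (fun x : ℝ => (-x) ^ e) (ENNReal.ofReal p) (volume.restrict (Iio (-R))) := by
  have hmeas : Measurable fun x : ℝ => (-x) ^ e := measurable_neg.pow_const e
  rw [← integrable_norm_rpow_iff hmeas.aestronglyMeasurable (by simpa using hp)
    ENNReal.ofReal_ne_top, ENNReal.toReal_ofReal hp.le]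
  refine (integrableOn_Iio_neg_rpow he hR).congr_fun (fun x hx => ?_) measurableSet_Iio
  have hx : 0 < -x := by
    rw [mem_Iio] at hx
    linarith
  rw [Real.norm_of_nonneg (Real.rpow_nonneg hx.le e), ← Real.rpow_mul hx.le]

section Kernel

variable {γ : ℝ → ℝ} {c lo hi p : ℝ}

lemma memLp_restrict_Ici_posPow_sub (hp : 0 < p) (hc : -1 < c * p) (u L : ℝ) :
    MemLp (fun x => posPow (u - x) c) (ENNReal.ofReal p) (volume.restrict (Ici L)) := by
  have hmeas : Measurable fun x => posPow (u - x) c :=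
    (measurable_const.sub measurable_id).posPow measurable_const
  rw [← integrable_norm_rpow_iff hmeas.aestronglyMeasurable (by simpa using hp)
    ENNReal.ofReal_ne_top, ENNReal.toReal_ofReal hp.le]
  simp_rw [Real.norm_of_nonneg (posPow_nonneg _ _), posPow_rpow hp.ne']
  exact integrableOn_Ici_posPow_sub hc u L

lemma memLp_restrict_Ici_posPow_sub_of_mem_Icc (hγm : Measurable γ) (hγ : ∀ x, γ x ∈ Icc lo hi)
    (hp : 0 < p) (hlo : -1 < lo * p) (u L : ℝ) :
    MemLp (fun x => posPow (u - x) (γ x)) (ENNReal.ofReal p) (volume.restrict (Ici L)) := by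
  have hhi : -1 < hi * p :=
    hlo.trans_le (mul_le_mul_of_nonneg_right ((hγ 0).1.trans (hγ 0).2) hp.le)
  refine ((memLp_restrict_Ici_posPow_sub hp hlo u L).add
    (memLp_restrict_Ici_posPow_sub hp hhi u L)).of_le
    ((measurable_const.sub measurable_id).posPow hγm).aestronglyMeasurable.restrict
    (ae_of_all _ fun x => ?_)
  simp only [Pi.add_apply, Real.norm_of_nonneg (posPow_nonneg _ _),
    Real.norm_of_nonneg (add_nonneg (posPow_nonneg _ _) (posPow_nonneg _ _))]
  exact posPow_le_posPow_add_posPow (hγ x).1 (hγ x).2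

lemma memLp_restrict_Iio_posPow_sub_sub (hγm : Measurable γ) (hγ : ∀ x, γ x ∈ Icc lo hi)
    (hp : 0 < p) (hhi : (hi - 1) * p < -1) (t s : ℝ) :
    MemLp (fun x => posPow (t - x) (γ x) - posPow (s - x) (γ x)) (ENNReal.ofReal p)
      (volume.restrict (Iio (-(2 * (|t| + |s| + 1))))) := by
  have hhi₁ : hi ≤ 1 := by nlinarith
  have hmeas : Measurable fun x => posPow (t - x) (γ x) - posPow (s - x) (γ x) :=
    ((measurable_const.sub measurable_id).posPow hγm).sub
      ((measurable_const.sub measurable_id).posPow hγm)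
  refine (memLp_restrict_Iio_neg_rpow hp hhi (by positivity)).of_le_mul
    (c := max |lo| |hi| * 2 ^ (1 - hi) * |t - s|) hmeas.aestronglyMeasurable.restrict
    (ae_restrict_of_forall_mem measurableSet_Iio fun x hx => ?_)
  have hx : 2 * (|t| + |s| + 1) ≤ -x := by
    rw [mem_Iio] at hx
    linarith
  rw [Real.norm_eq_abs, Real.norm_of_nonneg (Real.rpow_nonneg (le_trans (by positivity) hx) _)]
  exact abs_posPow_sub_sub_le (hγ x) hhi₁ hx

theorem memLp_posPow_sub_sub (hγm : Measurable γ) (hγ : ∀ x, γ x ∈ Icc lo hi) (hp : 0 < p)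
    (hlo : -(1 / p) < lo) (hhi : hi - 1 < -(1 / p)) (t s : ℝ) :
    MemLp (fun x => posPow (t - x) (γ x) - posPow (s - x) (γ x)) (ENNReal.ofReal p) := by
  rw [← neg_div] at hlo hhi
  have hlo' : -1 < lo * p := (div_lt_iff₀ hp).1 hlo
  have hhi' : (hi - 1) * p < -1 := (lt_div_iff₀ hp).1 hhi
  have hnear : MemLp (fun x => posPow (t - x) (γ x) - posPow (s - x) (γ x)) (ENNReal.ofReal p)
      (volume.restrict (Iio (-(2 * (|t| + |s| + 1))))ᶜ) := by
    rw [compl_Iio]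
    exact (memLp_restrict_Ici_posPow_sub_of_mem_Icc hγm hγ hp hlo' t _).sub
      (memLp_restrict_Ici_posPow_sub_of_mem_Icc hγm hγ hp hlo' s _)
  simpa using (memLp_restrict_Iio_posPow_sub_sub hγm hγ hp hhi' t s).piecewise measurableSet_Iio
    hnear

end Kernel

lemma MemLp.integrable_abs_rpow {α : Type*} [MeasurableSpace α] {μ : Measure α} {f : α → ℝ}
    {p : ℝ} (hp : 0 < p) (hf : MemLp f (ENNReal.ofReal p) μ) :
    Integrable (fun x => |f x| ^ p) μ := by
  simpa [ENNReal.toReal_ofReal hp.le] using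
    hf.integrable_norm_rpow (by simpa using hp) ENNReal.ofReal_ne_top

theorem linear_fractional_multistable_kernel_integrable_general (a b : ℝ)
    (ha : 0 < a) (hab : a ≤ b)
    (α : ℝ → ℝ) (hαm : Measurable α) (hα : ∀ x, α x ∈ Set.Icc a b)
    (h₀ : ℝ) (hh₀l : 1 / a - 1 / b < h₀) (hh₀r : h₀ < 1 + 1 / b - 1 / a) (t : ℝ) :
    Integrable (fun x : ℝ =>
      pab a b (posPow (t - x) (h₀ - 1 / α x) - posPow (-x) (h₀ - 1 / α x))) := by
  have hb : 0 < b := ha.trans_le hab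
  have hab' : 1 / b ≤ 1 / a := one_div_le_one_div_of_le ha hab
  have hγ : ∀ x, h₀ - 1 / α x ∈ Icc (h₀ - 1 / a) (h₀ - 1 / b) := fun x =>
    ⟨sub_le_sub_left (one_div_le_one_div_of_le ha (hα x).1) h₀,
      sub_le_sub_left (one_div_le_one_div_of_le (ha.trans_le (hα x).1) (hα x).2) h₀⟩
  have hγm : Measurable fun x => h₀ - 1 / α x := measurable_const.sub (measurable_const.div hαm)
  have hint : ∀ p, 0 < p → -(1 / p) < h₀ - 1 / a → h₀ - 1 / b - 1 < -(1 / p) →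
      Integrable fun x => |posPow (t - x) (h₀ - 1 / α x) - posPow (-x) (h₀ - 1 / α x)| ^ p :=
    fun p hp hlo hhi => by
      simpa using MemLp.integrable_abs_rpow hp (memLp_posPow_sub_sub hγm hγ hp hlo hhi t 0)
  exact (hint a ha (by linarith) (by linarith)).sup (hint b hb (by linarith) (by linarith))

/-- for `1/a − 1/b < h₀ < 1 + 1/b − 1/a` (with `h₀ ≠ 1/α(x)` for all `x`),
the linear fractional multistable kernel
`x ↦ (t−x)_+^{h₀−1/α(x)} − (−x)_+^{h₀−1/α(x)}` belongs to `F_{a,b}`. -/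
theorem linear_fractional_multistable_kernel_integrable (a b : ℝ)
    (ha : 0 < a) (hab : a ≤ b) (hb : b < 2)
    (α : ℝ → ℝ) (hαm : Measurable α) (hα : ∀ x, α x ∈ Set.Icc a b)
    (h₀ : ℝ) (hh₀l : 1 / a - 1 / b < h₀) (hh₀r : h₀ < 1 + 1 / b - 1 / a)
    (hh₀ : ∀ x, h₀ ≠ 1 / α x) (t : ℝ) :
    Integrable (fun x : ℝ =>
      pab a b (posPow (t - x) (h₀ - 1 / α x) - posPow (-x) (h₀ - 1 / α x))) :=
  linear_fractional_multistable_kernel_integrable_general a b ha hab α hαm hα h₀ hh₀l hh₀r t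
end
end
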